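/- arXiv:2407.18929 — 3 statements merged into one kernel-verified Lean document; each statement's English description precedes it below -/
import Mathlib

section
/- Let n ≥ 1, τ > 0 and g ∈ ℝⁿ be fixed, and let GS be the Gumbel-softmax map GS(x)_i = exp((x_i+g_i)/τ) / Σ_{j=1}^{n} exp((x_j+g_j)/τ). Let f : ℝⁿ → ℝ be differentiable at y = GS(x). If x is a critical point of L = f ∘ GS, i.e. all partial derivatives of L vanish at x, then for every index i one has y_i · Σ_{j≠i} y_j · (∂f/∂y_i (y) − ∂f/∂y_j (y)) = 0. -/
/-!
Write `z = (x + g) / τ` and `y = softmax z`. The Jacobian of softmax is `diag y - y yᵀ`, so the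
`i`-th partial derivative of `f ∘ GS` at `x` is `τ⁻¹ y_i (∂_i f(y) - Df(y) y)`. Because the `y_j`
sum to `1`, `∂_i f(y) - Df(y) y = ∑_{j ≠ i} y_j (∂_i f(y) - ∂_j f(y))`.
-/

open Real Finset

theorem sum_erase_mul_sub_eq {ι R L : Type*} [Fintype ι] [DecidableEq ι] [CommRing R]
    [FunLike L (ι → R) R] [LinearMapClass L R (ι → R) R] (F : L) {y : ι → R}
    (hy : ∑ j, y j = 1) (i : ι) :
    ∑ j ∈ univ.erase i, y j * (F (Pi.single i 1) - F (Pi.single j 1)) =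
      F (Pi.single i 1) - F y := by
  have hFy : F y = ∑ j, y j * F (Pi.single j 1) := by
    conv_lhs => rw [pi_eq_sum_univ' y]
    simp only [map_sum, map_smul, smul_eq_mul]
  rw [sum_erase _ (by simp), hFy]
  simp only [mul_sub, sum_sub_distrib, ← sum_mul, hy, one_mul]

section Softmax

variable {ι : Type*} [Fintype ι]

noncomputable def softmax (z : ι → ℝ) : ι → ℝ := fun k => exp (z k) / ∑ j, exp (z j)

theorem sum_exp_pos [Nonempty ι] (z : ι → ℝ) : 0 < ∑ j, exp (z j) :=
  sum_pos (fun j _ => exp_pos (z j)) univ_nonempty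

theorem sum_softmax [Nonempty ι] (z : ι → ℝ) : ∑ k, softmax z k = 1 := by
  simp only [softmax, ← sum_div, div_self (sum_exp_pos z).ne']

theorem softmax_eq_exp_sub_log [Nonempty ι] (z : ι → ℝ) (k : ι) :
    softmax z k = exp (z k - log (∑ j, exp (z j))) := by
  rw [exp_sub, exp_log (sum_exp_pos z), softmax]

theorem hasFDerivAt_logSumExp [Nonempty ι] (z : ι → ℝ) :
    HasFDerivAt (fun z : ι → ℝ => log (∑ j, exp (z j)))
      (∑ j, softmax z j • (ContinuousLinearMap.proj j : (ι → ℝ) →L[ℝ] ℝ)) z := by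
  have hsum := HasFDerivAt.fun_sum (u := univ)
    (fun j _ => (hasFDerivAt_apply (𝕜 := ℝ) j z).exp)
  refine (hsum.log (sum_exp_pos z).ne').congr_fderiv ?_
  simp only [smul_sum, smul_smul, softmax, div_eq_inv_mul]

theorem hasFDerivAt_softmax_apply (z : ι → ℝ) (k : ι) :
    HasFDerivAt (fun z => softmax z k)
      (softmax z k • (ContinuousLinearMap.proj k -
        ∑ j, softmax z j • (ContinuousLinearMap.proj j : (ι → ℝ) →L[ℝ] ℝ))) z := by
  have : Nonempty ι := ⟨k⟩
  simp only [softmax_eq_exp_sub_log _ k]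
  exact ((hasFDerivAt_apply k z).sub (hasFDerivAt_logSumExp z)).exp

noncomputable def softmaxFDeriv (z : ι → ℝ) : (ι → ℝ) →L[ℝ] ι → ℝ :=
  .pi fun k => softmax z k • (.proj k - ∑ j, softmax z j • .proj j)

theorem hasFDerivAt_softmax (z : ι → ℝ) : HasFDerivAt softmax (softmaxFDeriv z) z :=
  hasFDerivAt_pi.2 (hasFDerivAt_softmax_apply z)

theorem softmaxFDeriv_single [DecidableEq ι] (z : ι → ℝ) (i : ι) :
    softmaxFDeriv z (Pi.single i 1) = softmax z i • (Pi.single i 1 - softmax z) := by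
  ext k
  simp only [softmaxFDeriv, ContinuousLinearMap.pi_apply, smul_apply,
    sub_apply, _root_.sum_apply, ContinuousLinearMap.proj_apply,
    Pi.smul_apply, Pi.sub_apply, smul_eq_mul, Pi.single_apply, mul_ite, mul_one, mul_zero,
    sum_ite_eq', mem_univ, if_true]
  split_ifs with hki
  · rw [hki]
  · ring

end Softmax

theorem stmt2_general (n : ℕ) (τ : ℝ) (hτ : 0 < τ) (g : Fin n → ℝ)
    (GS : (Fin n → ℝ) → (Fin n → ℝ))
    (hGS : ∀ x i, GS x i =
      Real.exp ((x i + g i) / τ) / ∑ j : Fin n, Real.exp ((x j + g j) / τ))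
    (f : (Fin n → ℝ) → ℝ) (x y : Fin n → ℝ) (hy : y = GS x)
    (hf : DifferentiableAt ℝ f y)
    (hcrit : ∀ i : Fin n, fderiv ℝ (f ∘ GS) x (Pi.single i 1) = 0) :
    ∀ i : Fin n,
      y i * ∑ j ∈ Finset.univ.erase i,
        y j * (fderiv ℝ f y (Pi.single i 1) - fderiv ℝ f y (Pi.single j 1)) = 0 := by
  intro i
  have : Nonempty (Fin n) := ⟨i⟩
  set z := τ⁻¹ • (x + g)
  have hGS_comp : GS = softmax ∘ fun x => τ⁻¹ • (x + g) := by
    funext x k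
    simp [hGS, softmax, div_eq_inv_mul, mul_add]
  have hyz : y = softmax z := by rw [hy, hGS_comp]; rfl
  subst hyz
  set F := fderiv ℝ f (softmax z)
  have hL : HasFDerivAt (f ∘ GS)
      (F.comp ((softmaxFDeriv z).comp (τ⁻¹ • ContinuousLinearMap.id ℝ _))) x := by
    rw [hGS_comp]
    exact hf.hasFDerivAt.comp x
      ((hasFDerivAt_softmax z).comp x (((hasFDerivAt_id x).add_const g).const_smul τ⁻¹))
  have hpartial : τ⁻¹ * (softmax z i * (F (Pi.single i 1) - F (softmax z))) = 0 := by
    simpa [hL.fderiv, softmaxFDeriv_single] using hcrit i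
  rw [sum_erase_mul_sub_eq F (sum_softmax z) i]
  exact (mul_eq_zero.1 hpartial).resolve_left (inv_ne_zero hτ.ne')

/-- With `GS` the Gumbel-softmax map, `f` differentiable at `y = GS(x)`, if `x` is
a critical point of `L = f ∘ GS` (all partial derivatives of `L` vanish at `x`), then for every
index `i`, `y_i · ∑_{j≠i} y_j · (∂f/∂y_i (y) − ∂f/∂y_j (y)) = 0`. -/
theorem stmt2 (n : ℕ) (hn : 1 ≤ n) (τ : ℝ) (hτ : 0 < τ) (g : Fin n → ℝ)
    (GS : (Fin n → ℝ) → (Fin n → ℝ))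
    (hGS : ∀ x i, GS x i =
      Real.exp ((x i + g i) / τ) / ∑ j : Fin n, Real.exp ((x j + g j) / τ))
    (f : (Fin n → ℝ) → ℝ) (x y : Fin n → ℝ) (hy : y = GS x)
    (hf : DifferentiableAt ℝ f y)
    (hcrit : ∀ i : Fin n, fderiv ℝ (f ∘ GS) x (Pi.single i 1) = 0) :
    ∀ i : Fin n,
      y i * ∑ j ∈ Finset.univ.erase i,
        y j * (fderiv ℝ f y (Pi.single i 1) - fderiv ℝ f y (Pi.single j 1)) = 0 :=
  stmt2_general n τ hτ g GS hGS f x y hy hf hcrit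
end

section
/- For every t ∈ ℝ, the convolution-type integral expressing the distribution of the difference of two independent standard Gumbel variables evaluates to the logistic CDF: ∫_{−∞}^{∞} exp(−exp(−(y+t))) · exp(−y − exp(−y)) dy = 1/(1 + exp(−t)). -/
open Real MeasureTheory Set

/-! The substitution `u = exp (-y)` turns the integrand into `exp (-(1 + exp (-t)) * u)` on
`(0, ∞)`, whose integral is `1 / (1 + exp (-t))`. -/

theorem integral_comp_exp_neg {E : Type*} [NormedAddCommGroup E] [NormedSpace ℝ E]
    (g : ℝ → E) : ∫ y, exp (-y) • g (exp (-y)) = ∫ u in Ioi 0, g u := by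
  rw [← integral_neg_eq_self, ← range_exp, ← image_univ, ← setIntegral_univ]
  simp_rw [neg_neg]
  simpa [abs_of_pos (exp_pos _)] using (integral_image_eq_integral_abs_deriv_smul
    MeasurableSet.univ (fun x _ ↦ (hasDerivAt_exp x).hasDerivWithinAt)
    (fun x _ y _ hxy ↦ exp_injective hxy) g).symm

/-- For every `t ∈ ℝ`, the convolution-type integral expressing the distribution of
the difference of two independent standard Gumbel variables evaluates to the logistic CDF:
`∫ exp(−exp(−(y+t))) · exp(−y − exp(−y)) dy = 1/(1 + exp(−t))`. -/
theorem stmt9 (t : ℝ) :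
    ∫ y : ℝ, Real.exp (-Real.exp (-(y + t))) * Real.exp (-y - Real.exp (-y)) =
      1 / (1 + Real.exp (-t)) := by
  have hc : 0 < 1 + exp (-t) := by positivity
  have hintegrand : ∀ y, exp (-exp (-(y + t))) * exp (-y - exp (-y)) =
      exp (-y) • exp (-(1 + exp (-t)) * exp (-y)) := fun y ↦ by
    rw [smul_eq_mul, ← exp_add, ← exp_add]
    congr 1
    rw [neg_add, exp_add]
    ring
  simp_rw [hintegrand, integral_comp_exp_neg (fun u ↦ exp (-(1 + exp (-t)) * u)),
    integral_exp_mul_Ioi (neg_lt_zero.mpr hc), mul_zero, exp_zero]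
  field_simp
end

section
/- Let (Ω, ℱ, P) be a probability space and let X, Y : Ω → ℝ be independent random variables, each distributed according to the measure on ℝ with density x ↦ exp(−x − exp(−x)) with respect to Lebesgue measure (the standard Gumbel distribution). Then the difference X − Y follows the Logistic(0,1) distribution: for every t ∈ ℝ, P(X − Y ≤ t) = 1/(1 + exp(−t)). -/
open Real MeasureTheory ProbabilityTheory Filter Set Topology

/-! Conditioning on `Y`, `P(X - Y ≤ t) = ∫ F(t + y) dG(y)`, where `F(x) = exp(-e⁻ˣ)` is the Gumbel
distribution function. The integrand `F(t + y) · e^{-y - e^{-y}}` equals `e^{-y - a e^{-y}}` with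
`a = 1 + e⁻ᵗ`, which has the primitive `a⁻¹ exp(-a e^{-y})`; so the integral is `1 / (1 + e⁻ᵗ)`. -/

theorem integrable_deriv_of_nonneg {g g' : ℝ → ℝ} {m n : ℝ}
    (hderiv : ∀ x, HasDerivAt g (g' x) x) (hg' : ∀ x, 0 ≤ g' x)
    (hbot : Tendsto g atBot (𝓝 m)) (htop : Tendsto g atTop (𝓝 n)) : Integrable g' := by
  have hmono : Monotone g := monotone_of_hasDerivAt_nonneg hderiv hg'
  refine integrable_of_intervalIntegral_norm_bounded (l := atTop) (a := Neg.neg) (b := id)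
    (n - m) (fun i => ?_) tendsto_neg_atTop_atBot tendsto_id (Eventually.of_forall fun i => ?_)
  · exact intervalIntegral.integrableOn_deriv_of_nonneg
      (fun x _ => (hderiv x).continuousAt.continuousWithinAt) (fun x _ => hderiv x)
      fun x _ => hg' x
  calc ∫ x in -i..i, ‖g' x‖ = ∫ x in -i..i, g' x := by
        refine intervalIntegral.integral_congr fun x _ => ?_
        exact Real.norm_of_nonneg (hg' x)
    _ = g i - g (-i) :=
        intervalIntegral.integral_eq_sub_of_hasDerivAt (fun x _ => hderiv x)
          (intervalIntegral.intervalIntegrable_deriv_of_nonneg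
            (fun x _ => (hderiv x).continuousAt.continuousWithinAt) (fun x _ => hderiv x)
            fun x _ => hg' x)
    _ ≤ n - m := sub_le_sub (hmono.ge_of_tendsto htop i) (hmono.le_of_tendsto hbot (-i))

section ExpNegMulExpNeg

variable {a : ℝ}

theorem hasDerivAt_exp_neg_mul_exp_neg (a x : ℝ) :
    HasDerivAt (fun y => exp (-a * exp (-y))) (a * exp (-x - a * exp (-x))) x := by
  have hinner : HasDerivAt (fun y => -a * exp (-y)) (a * exp (-x)) x := by
    simpa using ((hasDerivAt_neg x).exp).const_mul (-a)
  convert hinner.exp using 1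
  rw [sub_eq_add_neg, exp_add, neg_mul]
  ring

theorem tendsto_exp_neg_mul_exp_neg_atBot (ha : 0 < a) :
    Tendsto (fun y => exp (-a * exp (-y))) atBot (𝓝 0) := by
  have hexp : Tendsto (fun y : ℝ => exp (-y)) atBot atTop :=
    tendsto_exp_atTop.comp tendsto_neg_atBot_atTop
  exact tendsto_exp_atBot.comp (hexp.const_mul_atTop_of_neg (neg_lt_zero.mpr ha))

theorem tendsto_exp_neg_mul_exp_neg_atTop (a : ℝ) :
    Tendsto (fun y => exp (-a * exp (-y))) atTop (𝓝 1) := by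
  have hexp : Tendsto (fun y : ℝ => exp (-y)) atTop (𝓝 0) :=
    tendsto_exp_atBot.comp tendsto_neg_atTop_atBot
  have h := (continuous_exp.tendsto _).comp (hexp.const_mul (-a))
  rwa [mul_zero, exp_zero] at h

theorem integrable_exp_neg_sub_mul_exp_neg (ha : 0 < a) :
    Integrable fun x => exp (-x - a * exp (-x)) := by
  have h := (integrable_deriv_of_nonneg (hasDerivAt_exp_neg_mul_exp_neg a)
    (fun x => by positivity) (tendsto_exp_neg_mul_exp_neg_atBot ha)
    (tendsto_exp_neg_mul_exp_neg_atTop a)).const_mul a⁻¹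
  simpa [inv_mul_cancel_left₀ ha.ne'] using h

theorem integrable_exp_neg_sub_exp_neg : Integrable fun x => exp (-x - exp (-x)) := by
  simpa using integrable_exp_neg_sub_mul_exp_neg one_pos

theorem integral_exp_neg_sub_mul_exp_neg (ha : 0 < a) :
    ∫ x, exp (-x - a * exp (-x)) = a⁻¹ := by
  have h := integral_of_hasDerivAt_of_tendsto (hasDerivAt_exp_neg_mul_exp_neg a)
    ((integrable_exp_neg_sub_mul_exp_neg ha).const_mul a)
    (tendsto_exp_neg_mul_exp_neg_atBot ha) (tendsto_exp_neg_mul_exp_neg_atTop a)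
  rw [integral_const_mul, sub_zero] at h
  exact eq_inv_of_mul_eq_one_right h

theorem setIntegral_Iic_exp_neg_sub_exp_neg (s : ℝ) :
    ∫ x in Iic s, exp (-x - exp (-x)) = exp (-exp (-s)) := by
  have h := integral_Iic_of_hasDerivAt_of_tendsto' (a := s)
    (fun x _ => hasDerivAt_exp_neg_mul_exp_neg 1 x)
    (by simpa using integrable_exp_neg_sub_exp_neg.integrableOn)
    (tendsto_exp_neg_mul_exp_neg_atBot one_pos)
  simpa using h

end ExpNegMulExpNeg

theorem measure_sub_le_eq_lintegral_map {Ω : Type*} [MeasurableSpace Ω] {μ : Measure Ω}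
    [IsFiniteMeasure μ] {X Y : Ω → ℝ} (hXY : IndepFun X Y μ) (hX : AEMeasurable X μ)
    (hY : AEMeasurable Y μ) (t : ℝ) :
    μ {ω | X ω - Y ω ≤ t} = ∫⁻ y, μ.map X (Iic (t + y)) ∂μ.map Y := by
  have hS : MeasurableSet {p : ℝ × ℝ | p.1 - p.2 ≤ t} :=
    measurableSet_le (by fun_prop) measurable_const
  rw [show {ω | X ω - Y ω ≤ t} = (fun ω => (X ω, Y ω)) ⁻¹' {p | p.1 - p.2 ≤ t} from rfl,
    ← Measure.map_apply_of_aemeasurable (hX.prodMk hY) hS, hXY.map_prod_eq_prod_map_map hX hY,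
    Measure.prod_apply_symm hS]
  congr with y
  congr 1 with x
  simp

noncomputable def gumbelMeasure : Measure ℝ :=
  volume.withDensity fun x => ENNReal.ofReal (exp (-x - exp (-x)))

theorem gumbelMeasure_apply {s : Set ℝ} (hs : MeasurableSet s) :
    gumbelMeasure s = ENNReal.ofReal (∫ x in s, exp (-x - exp (-x))) := by
  rw [gumbelMeasure, withDensity_apply _ hs, ofReal_integral_eq_lintegral_ofReal
    integrable_exp_neg_sub_exp_neg.integrableOn (Eventually.of_forall fun x => (exp_pos _).le)]

instance : IsProbabilityMeasure gumbelMeasure where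
  measure_univ := by
    simpa [gumbelMeasure_apply MeasurableSet.univ] using integral_exp_neg_sub_mul_exp_neg one_pos

theorem gumbelMeasure_Iic (s : ℝ) :
    gumbelMeasure (Iic s) = ENNReal.ofReal (exp (-exp (-s))) := by
  rw [gumbelMeasure_apply measurableSet_Iic, setIntegral_Iic_exp_neg_sub_exp_neg]

theorem lintegral_gumbelMeasure_Iic_add (t : ℝ) :
    ∫⁻ y, gumbelMeasure (Iic (t + y)) ∂gumbelMeasure = ENNReal.ofReal (1 / (1 + exp (-t))) := by
  have hdensity (y : ℝ) : exp (-y - exp (-y)) * exp (-exp (-(t + y)))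
      = exp (-y - (1 + exp (-t)) * exp (-y)) := by
    rw [← exp_add, neg_add, exp_add (-t)]
    congr 1
    ring
  simp_rw [gumbelMeasure_Iic]
  rw [gumbelMeasure, lintegral_withDensity_eq_lintegral_mul _ (by fun_prop) (by fun_prop)]
  simp_rw [Pi.mul_apply, ← ENNReal.ofReal_mul (exp_pos _).le, hdensity]
  rw [← ofReal_integral_eq_lintegral_ofReal (integrable_exp_neg_sub_mul_exp_neg (by positivity))
    (Eventually.of_forall fun x => (exp_pos _).le), integral_exp_neg_sub_mul_exp_neg
    (by positivity), one_div]

/-- If `X, Y` are independent random variables on a probability space, each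
distributed according to the standard Gumbel distribution (the measure on `ℝ` with density
`x ↦ exp(−x − exp(−x))` with respect to Lebesgue measure), then `X − Y` follows the
`Logistic(0,1)` distribution: `P(X − Y ≤ t) = 1/(1 + exp(−t))` for every `t`. -/
theorem stmt10 {Ω : Type*} [MeasureSpace Ω] [IsProbabilityMeasure (ℙ : Measure Ω)]
    (X Y : Ω → ℝ) (hXY : IndepFun X Y ℙ)
    (hX : Measure.map X ℙ =
      volume.withDensity (fun x => ENNReal.ofReal (Real.exp (-x - Real.exp (-x)))))
    (hY : Measure.map Y ℙ =
      volume.withDensity (fun x => ENNReal.ofReal (Real.exp (-x - Real.exp (-x))))) :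
    ∀ t : ℝ, ℙ {ω | X ω - Y ω ≤ t} = ENNReal.ofReal (1 / (1 + Real.exp (-t))) := by
  change Measure.map X ℙ = gumbelMeasure at hX
  change Measure.map Y ℙ = gumbelMeasure at hY
  have hXm : AEMeasurable X ℙ := .of_map_ne_zero (hX ▸ IsProbabilityMeasure.ne_zero _)
  have hYm : AEMeasurable Y ℙ := .of_map_ne_zero (hY ▸ IsProbabilityMeasure.ne_zero _)
  intro t
  rw [measure_sub_le_eq_lintegral_map hXY hXm hYm, hX, hY, lintegral_gumbelMeasure_Iic_add]
end
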